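/- Let q ∈ (0,1) and x ∈ Δ_2 with x_1 > x_2. Then G_3(x) > G_2(x). -/

import Mathlib

/-!
On the simplex, `G₃ - G₂` is the square `(x₂ - x₃)²` plus `2 x₂ (x₁ - x₂)`, which is positive when
`x₁ > x₂`, plus `2 (1 - q) x₃ (x₁ + 2 x₂)`, which is nonnegative for `q ≤ 1`.
-/

open Filter Topology

/-- The map G = (G₁,G₂,G₃) on ℝ³ (with parameter q):
G₁(x) = x₁² + 2q x₁ x₃, G₂(x) = x₂² + 2q x₂ x₃,
G₃(x) = x₃² + 2 x₁ x₂ + 2(1−q) x₁ x₃ + 2(1−q) x₂ x₃. -/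
noncomputable def Gmap (q : ℝ) (x : ℝ × ℝ × ℝ) : ℝ × ℝ × ℝ :=
  (x.1 ^ 2 + 2 * q * x.1 * x.2.2,
   x.2.1 ^ 2 + 2 * q * x.2.1 * x.2.2,
   x.2.2 ^ 2 + 2 * x.1 * x.2.1 + 2 * (1 - q) * x.1 * x.2.2
     + 2 * (1 - q) * x.2.1 * x.2.2)

/-- The open simplex Δ₂ ⊆ ℝ³. -/
def simplex2 : Set (ℝ × ℝ × ℝ) :=
  {p | p.1 + p.2.1 + p.2.2 = 1 ∧ 0 < p.1 ∧ 0 < p.2.1 ∧ 0 < p.2.2}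

lemma Gmap_snd_snd_sub_snd_fst (q : ℝ) (x : ℝ × ℝ × ℝ) :
    (Gmap q x).2.2 - (Gmap q x).2.1 =
      (x.2.1 - x.2.2) ^ 2 + 2 * x.2.1 * (x.1 - x.2.1) + 2 * (1 - q) * x.2.2 * (x.1 + 2 * x.2.1) := by
  simp only [Gmap]
  ring

theorem G3_gt_G2_general (q : ℝ) (hq1 : q < 1)
    (x : ℝ × ℝ × ℝ) (hx : x ∈ simplex2) (h12 : x.2.1 < x.1) :
    (Gmap q x).2.1 < (Gmap q x).2.2 := by
  obtain ⟨-, -, hx₂, hx₃⟩ := hx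
  have h1q : 0 < 1 - q := sub_pos.2 hq1
  have h12' : 0 < x.1 - x.2.1 := sub_pos.2 h12
  have hcross : 0 < 2 * x.2.1 * (x.1 - x.2.1) := by positivity
  have hq_term : 0 ≤ 2 * (1 - q) * x.2.2 * (x.1 + 2 * x.2.1) := by
    have : 0 < x.1 + 2 * x.2.1 := by linarith
    positivity
  rw [← sub_pos, Gmap_snd_snd_sub_snd_fst]
  linarith [sq_nonneg (x.2.1 - x.2.2)]

/-- If x ∈ Δ₂ with x₁ > x₂, then G₃(x) > G₂(x). -/
theorem G3_gt_G2 (q : ℝ) (hq0 : 0 < q) (hq1 : q < 1)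
    (x : ℝ × ℝ × ℝ) (hx : x ∈ simplex2) (h12 : x.2.1 < x.1) :
    (Gmap q x).2.1 < (Gmap q x).2.2 :=
  G3_gt_G2_general q hq1 x hx h12
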